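/- Let X be an order-N real tensor with dimensions s₁×⋯×s_N, let G be an order-N tensor with dimensions R₁×⋯×R_N where R_l ≤ s_l for every l, and for each l ∈ {1,…,N} let A^{(l)} ∈ ℝ^{s_l×R_l} have orthonormal columns, with ‖X − G ×₁ A^{(1)} ⋯ ×_N A^{(N)}‖₂ ≤ (1/3)‖X‖₂. Let Y^{(1)} = X ×₂ A^{(2)ᵀ} ⋯ ×_N A^{(N)ᵀ}, and for distinct i, j ∈ {2,…,N} let Y^{(i,j,1)} be X contracted in mode l with A^{(l)ᵀ} for every l ∈ {2,…,N}∖{i,j}. If dA^{(i)} ∈ ℝ^{s_i×R_i} and dA^{(j)} ∈ ℝ^{s_j×R_j} satisfy ‖dA^{(i)}‖₂ ≤ ε and ‖dA^{(j)}‖₂ ≤ ε, then ‖Y^{(i,j,1)} ×_i dA^{(i)ᵀ} ×_j dA^{(j)ᵀ}‖₂ ≤ 5 ε² ‖Y^{(1)}‖₂. This bounds each second-order pairwise-perturbation error term relative to the exact Tucker-ALS contraction, independently of the condition number of X. -/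

import Mathlib

open scoped BigOperators

/-- Euclidean (ℓ²) norm of a vector. -/
noncomputable def vnorm {n : ℕ} (v : Fin n → ℝ) : ℝ := Real.sqrt (∑ i, v i ^ 2)

/-- Frobenius norm: the ℓ² norm of all entries. -/
noncomputable def fnorm {ι : Type*} [Fintype ι] (T : ι → ℝ) : ℝ := Real.sqrt (∑ i, T i ^ 2)

/-- Matrix–vector product. -/
noncomputable def matvec {m n : ℕ} (M : Fin m → Fin n → ℝ) (x : Fin n → ℝ) : Fin m → ℝ :=
  fun i => ∑ j, M i j * x j

/-- Matrix–matrix product. -/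
noncomputable def matmul {m n p : ℕ} (A : Fin m → Fin n → ℝ) (B : Fin n → Fin p → ℝ) :
    Fin m → Fin p → ℝ :=
  fun i j => ∑ k, A i k * B k j

/-- Matrix spectral norm. -/
noncomputable def mnorm {m n : ℕ} (M : Fin m → Fin n → ℝ) : ℝ :=
  sSup {r | ∃ x : Fin n → ℝ, vnorm x = 1 ∧ r = vnorm (matvec M x)}

/-- `I(M)`: the infimum of `‖Mx‖₂` over unit vectors `x`. -/
noncomputable def minf {m n : ℕ} (M : Fin m → Fin n → ℝ) : ℝ :=
  sInf {r | ∃ x : Fin n → ℝ, vnorm x = 1 ∧ r = vnorm (matvec M x)}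

/-- Matrix Frobenius norm. -/
noncomputable def mfro {m n : ℕ} (M : Fin m → Fin n → ℝ) : ℝ :=
  Real.sqrt (∑ i, ∑ j, M i j ^ 2)

/-- The multilinear map `g_T` associated to an order-`(d+1)` tensor `T`;
mode `0` is the output mode, modes `1,…,d` are the input modes. -/
noncomputable def gmap {d : ℕ} {s : Fin (d+1) → ℕ} (T : (∀ i, Fin (s i)) → ℝ)
    (x : ∀ i, Fin (s i) → ℝ) : Fin (s 0) → ℝ :=
  fun i₁ => ∑ j : (∀ i, Fin (s i)),
    if j 0 = i₁ then T j * ∏ k ∈ Finset.univ.erase (0 : Fin (d+1)), x k (j k) else 0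

/-- The inputs `x i`, `i ≠ 0`, are all unit vectors. -/
def unitInputs {d : ℕ} {s : Fin (d+1) → ℕ} (x : ∀ i, Fin (s i) → ℝ) : Prop :=
  ∀ i : Fin (d+1), i ≠ 0 → vnorm (x i) = 1

/-- Tensor spectral norm: supremum of `‖g_T(x₂,…,x_N)‖₂` over unit inputs. -/
noncomputable def tnorm {d : ℕ} {s : Fin (d+1) → ℕ} (T : (∀ i, Fin (s i)) → ℝ) : ℝ :=
  sSup {r | ∃ x : (∀ i, Fin (s i) → ℝ), unitInputs x ∧ r = vnorm (gmap T x)}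

/-- `I(T)`: infimum of `‖g_T(x₂,…,x_N)‖₂` over unit inputs. -/
noncomputable def tinf {d : ℕ} {s : Fin (d+1) → ℕ} (T : (∀ i, Fin (s i)) → ℝ) : ℝ :=
  sInf {r | ∃ x : (∀ i, Fin (s i) → ℝ), unitInputs x ∧ r = vnorm (gmap T x)}

/-- Tensor condition number `κ(T) = ‖T‖₂ / I(T)`. -/
noncomputable def tcond {d : ℕ} {s : Fin (d+1) → ℕ} (T : (∀ i, Fin (s i)) → ℝ) : ℝ :=
  tnorm T / tinf T

/-- Dimensions after replacing the size of mode `n` by `J`. -/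
def repl {d : ℕ} (s : Fin (d+1) → ℕ) (n : Fin (d+1)) (J : ℕ) : Fin (d+1) → ℕ :=
  fun i => if i = n then J else s i

/-- Mode-`n` product `T ×ₙ A` with a matrix `A : Fin J → Fin (s n) → ℝ`:
`(T ×ₙ A)(i₁,…,a,…,i_N) = ∑ₖ T(i₁,…,k,…,i_N) A(a,k)`. -/
noncomputable def modeProd {d : ℕ} {s : Fin (d+1) → ℕ} (T : (∀ i, Fin (s i)) → ℝ)
    (n : Fin (d+1)) {J : ℕ} (A : Fin J → Fin (s n) → ℝ) :
    (∀ i, Fin (repl s n J i)) → ℝ :=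
  fun j => ∑ k : Fin (s n),
    T (fun i => if h : i = n then Fin.cast (congrArg s h.symm) k
        else Fin.cast (show repl s n J i = s i by simp [repl, h]) (j i)) *
      A (Fin.cast (show repl s n J n = J by simp [repl]) (j n)) k

/-- Multilinear transformation of a tensor: `multiProd X B = X ×₁ B₁ ×₂ ⋯ ×_N B_N`. -/
noncomputable def multiProd {d : ℕ} {s R : Fin (d+1) → ℕ}
    (X : (∀ i, Fin (s i)) → ℝ) (B : ∀ l, Fin (R l) → Fin (s l) → ℝ) :
    (∀ l, Fin (R l)) → ℝ :=
  fun j => ∑ k : (∀ l, Fin (s l)), X k * ∏ l, B l (j l) (k l)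

/-- Dimensions of `partialContract`: modes in `E` are kept at size `s l`,
the other modes are contracted down to size `R l`. -/
def keepDims {d : ℕ} (s R : Fin (d+1) → ℕ) (E : Finset (Fin (d+1))) : Fin (d+1) → ℕ :=
  fun l => if l ∈ E then s l else R l

/-- Contract every mode `l ∉ E` of `X` with `(A l)ᵀ`; keep the modes in `E` untouched. -/
noncomputable def partialContract {d : ℕ} {s R : Fin (d+1) → ℕ}
    (X : (∀ i, Fin (s i)) → ℝ) (A : ∀ l, Fin (s l) → Fin (R l) → ℝ)
    (E : Finset (Fin (d+1))) : (∀ l, Fin (keepDims s R E l)) → ℝ :=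
  multiProd X (fun l a b =>
    if h : l ∈ E then
      (if b = Fin.cast (show keepDims s R E l = s l by simp [keepDims, h]) a then (1:ℝ) else 0)
    else A l b (Fin.cast (show keepDims s R E l = R l by simp [keepDims, h]) a))

/-! With orthonormal factors, contracting the modes `l ≠ 0` with `A lᵀ` never increases the
spectral norm, and does not decrease it on the Tucker tensor `X̂ = G ×₁ A₁ ⋯ ×_N A_N`. Writing
`E = X - X̂` and `Y = Y^{(1)}`, this gives `‖X‖ ≤ ‖X̂‖ + ‖E‖ ≤ ‖Y‖ + 2‖E‖ ≤ ‖Y‖ + ⅔‖X‖`, so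
`‖X‖ ≤ 3‖Y‖`. The second-order term is `X` contracted with matrices of spectral norms at most
`ε, ε, 1, …, 1`, hence its norm is at most `ε²‖X‖ ≤ 3ε²‖Y‖`. -/

open Matrix Finset

lemma Finset.prod_le_mul_of_le_one {ι : Type*} [DecidableEq ι] {t : Finset ι} {f : ι → ℝ}
    {i j : ι} (hi : i ∈ t) (hj : j ∈ t) (hij : i ≠ j) (h0 : ∀ l ∈ t, 0 ≤ f l)
    (h1 : ∀ l ∈ t, l ≠ i → l ≠ j → f l ≤ 1) : ∏ l ∈ t, f l ≤ f i * f j := by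
  rw [← mul_prod_erase t f hi,
    ← mul_prod_erase (t.erase i) f (mem_erase.2 ⟨hij.symm, hj⟩), ← mul_assoc]
  refine mul_le_of_le_one_right (mul_nonneg (h0 i hi) (h0 j hj)) (prod_le_one ?_ ?_)
  · exact fun l hl => h0 l (mem_of_mem_erase (mem_of_mem_erase hl))
  · intro l hl
    obtain ⟨hlj, hl'⟩ := mem_erase.1 hl
    obtain ⟨hli, hlt⟩ := mem_erase.1 hl'
    exact h1 l hlt hli hlj

section vectors
variable {n : ℕ}

lemma vnorm_eq_norm (v : Fin n → ℝ) : vnorm v = ‖WithLp.toLp 2 v‖ := by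
  simp [vnorm, EuclideanSpace.norm_eq]

lemma vnorm_nonneg (v : Fin n → ℝ) : 0 ≤ vnorm v := Real.sqrt_nonneg _

lemma vnorm_smul (c : ℝ) (v : Fin n → ℝ) : vnorm (c • v) = |c| * vnorm v := by
  simp [vnorm_eq_norm, norm_smul]

lemma vnorm_add_le (v w : Fin n → ℝ) : vnorm (v + w) ≤ vnorm v + vnorm w := by
  simpa [vnorm_eq_norm] using norm_add_le (WithLp.toLp 2 v) (WithLp.toLp 2 w)

lemma vnorm_sub_le (v w : Fin n → ℝ) : vnorm (v - w) ≤ vnorm v + vnorm w := by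
  simpa [vnorm_eq_norm] using norm_sub_le (WithLp.toLp 2 v) (WithLp.toLp 2 w)

lemma vnorm_eq_zero {v : Fin n → ℝ} : vnorm v = 0 ↔ v = 0 := by
  simp [vnorm_eq_norm]

lemma abs_le_vnorm (v : Fin n → ℝ) (i : Fin n) : |v i| ≤ vnorm v := by
  simpa [vnorm_eq_norm] using PiLp.norm_apply_le (WithLp.toLp 2 v) i

lemma dotProduct_le_vnorm_mul (v w : Fin n → ℝ) : v ⬝ᵥ w ≤ vnorm v * vnorm w := by
  simpa [vnorm_eq_norm, EuclideanSpace.inner_toLp_toLp, dotProduct_comm] using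
    real_inner_le_norm (WithLp.toLp 2 v) (WithLp.toLp 2 w)

lemma vnorm_sq (v : Fin n → ℝ) : vnorm v ^ 2 = v ⬝ᵥ v := by
  rw [vnorm, Real.sq_sqrt (sum_nonneg fun i _ => sq_nonneg _)]
  simp [dotProduct, sq]

lemma vnorm_le_of_abs_le {v : Fin n → ℝ} {c : ℝ} (hc : 0 ≤ c) (h : ∀ i, |v i| ≤ c) :
    vnorm v ≤ Real.sqrt n * c := by
  rw [← Real.sqrt_sq hc, ← Real.sqrt_mul (Nat.cast_nonneg n), vnorm]
  refine Real.sqrt_le_sqrt ?_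
  simpa using sum_le_sum fun i (_ : i ∈ univ) => sq_le_sq' (abs_le.1 (h i)).1 (abs_le.1 (h i)).2

lemma vnorm_comp_cast {m : ℕ} (h : n = m) (v : Fin m → ℝ) : vnorm (v ∘ Fin.cast h) = vnorm v := by
  subst h; rfl

end vectors

section matrices
variable {m n : ℕ}

lemma mnorm_nonneg (M : Matrix (Fin m) (Fin n) ℝ) : 0 ≤ mnorm M :=
  Real.sSup_nonneg fun _ ⟨_, _, hr⟩ => hr ▸ vnorm_nonneg _

lemma mnorm_le {M : Matrix (Fin m) (Fin n) ℝ} {c : ℝ} (hc : 0 ≤ c)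
    (h : ∀ x, vnorm x = 1 → vnorm (M *ᵥ x) ≤ c) : mnorm M ≤ c :=
  Real.sSup_le (fun _ ⟨x, hx, hr⟩ => hr ▸ h x hx) hc

lemma mnorm_bddAbove (M : Matrix (Fin m) (Fin n) ℝ) :
    BddAbove {r | ∃ x : Fin n → ℝ, vnorm x = 1 ∧ r = vnorm (matvec M x)} := by
  refine ⟨Real.sqrt m * ∑ i, ∑ j, |M i j|, ?_⟩
  rintro r ⟨x, hx, rfl⟩
  refine vnorm_le_of_abs_le (by positivity) fun i => ?_
  calc |∑ j, M i j * x j| ≤ ∑ j, |M i j| := by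
        refine (abs_sum_le_sum_abs _ _).trans (sum_le_sum fun j _ => ?_)
        rw [abs_mul]
        exact mul_le_of_le_one_right (abs_nonneg _) (hx ▸ abs_le_vnorm x j)
    _ ≤ ∑ i, ∑ j, |M i j| :=
        single_le_sum (f := fun i => ∑ j, |M i j|)
          (fun i _ => sum_nonneg fun j _ => abs_nonneg _) (mem_univ i)

lemma vnorm_mulVec_le (M : Matrix (Fin m) (Fin n) ℝ) (x : Fin n → ℝ) :
    vnorm (M *ᵥ x) ≤ mnorm M * vnorm x := by
  rcases eq_or_ne x 0 with rfl | hx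
  · simp [vnorm_eq_zero.2]
  have hpos : 0 < vnorm x := (vnorm_nonneg x).lt_of_ne' (vnorm_eq_zero.not.2 hx)
  have hunit : vnorm ((vnorm x)⁻¹ • x) = 1 := by
    rw [vnorm_smul, abs_inv, abs_of_pos hpos, inv_mul_cancel₀ hpos.ne']
  have hle : vnorm (M *ᵥ ((vnorm x)⁻¹ • x)) ≤ mnorm M :=
    le_csSup (mnorm_bddAbove M) ⟨_, hunit, rfl⟩
  rw [mulVec_smul, vnorm_smul, abs_inv, abs_of_pos hpos, inv_mul_le_iff₀ hpos] at hle
  linarith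

lemma mnorm_transpose_le (M : Matrix (Fin m) (Fin n) ℝ) : mnorm Mᵀ ≤ mnorm M := by
  refine mnorm_le (mnorm_nonneg M) fun x hx => ?_
  have hsq : vnorm (Mᵀ *ᵥ x) ^ 2 ≤ mnorm M * vnorm (Mᵀ *ᵥ x) :=
    calc vnorm (Mᵀ *ᵥ x) ^ 2 = x ⬝ᵥ M *ᵥ (Mᵀ *ᵥ x) := by
          rw [vnorm_sq, dotProduct_mulVec, vecMul_transpose, dotProduct_comm]
      _ ≤ vnorm x * vnorm (M *ᵥ (Mᵀ *ᵥ x)) := dotProduct_le_vnorm_mul _ _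
      _ ≤ mnorm M * vnorm (Mᵀ *ᵥ x) := by rw [hx, one_mul]; exact vnorm_mulVec_le _ _
  nlinarith [vnorm_nonneg (Mᵀ *ᵥ x), mnorm_nonneg M]

end matrices

section orthonormal
variable {m n : ℕ} {A : Matrix (Fin m) (Fin n) ℝ}

lemma transpose_mul_self_eq_one_iff :
    Aᵀ * A = 1 ↔ ∀ k k', ∑ i, A i k * A i k' = if k = k' then 1 else 0 := by
  simp [← ext_iff, mul_apply, one_apply]

lemma transpose_mulVec_mulVec (hA : Aᵀ * A = 1) (v : Fin n → ℝ) : Aᵀ *ᵥ (A *ᵥ v) = v := by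
  rw [mulVec_mulVec, hA, one_mulVec]

lemma vnorm_mulVec_of_orthonormal (hA : Aᵀ * A = 1) (v : Fin n → ℝ) :
    vnorm (A *ᵥ v) = vnorm v := by
  refine (pow_left_inj₀ (vnorm_nonneg _) (vnorm_nonneg _) two_ne_zero).1 ?_
  rw [vnorm_sq, vnorm_sq, dotProduct_mulVec, ← mulVec_transpose, transpose_mulVec_mulVec hA]

lemma mnorm_le_one_of_orthonormal (hA : Aᵀ * A = 1) : mnorm A ≤ 1 :=
  mnorm_le zero_le_one fun x hx => by rw [vnorm_mulVec_of_orthonormal hA, hx]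

lemma mnorm_transpose_le_one_of_orthonormal (hA : Aᵀ * A = 1) : mnorm Aᵀ ≤ 1 :=
  (mnorm_transpose_le A).trans (mnorm_le_one_of_orthonormal hA)

end orthonormal

section tensors
variable {d : ℕ} {s R : Fin (d+1) → ℕ}

def fullContract (T : (∀ l, Fin (s l)) → ℝ) (y : ∀ l, Fin (s l) → ℝ) : ℝ :=
  ∑ k, T k * ∏ l, y l (k l)

lemma fullContract_update_zero (T : (∀ l, Fin (s l)) → ℝ) (x : ∀ l, Fin (s l) → ℝ)
    (w : Fin (s 0) → ℝ) : fullContract T (Function.update x 0 w) = w ⬝ᵥ gmap T x := by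
  simp only [fullContract, dotProduct, gmap, mul_sum, mul_ite, mul_zero]
  rw [sum_comm]
  refine sum_congr rfl fun k _ => ?_
  rw [sum_ite_eq, if_pos (mem_univ _), ← mul_prod_erase univ _ (mem_univ 0)]
  simp only [Function.update_self]
  rw [prod_congr rfl fun l hl => by rw [Function.update_of_ne (mem_erase.1 hl).1]]
  ring

lemma fullContract_multiProd (X : (∀ l, Fin (s l)) → ℝ) (B : ∀ l, Matrix (Fin (R l)) (Fin (s l)) ℝ)
    (y : ∀ l, Fin (R l) → ℝ) :
    fullContract (multiProd X B) y = fullContract X (fun l => (B l)ᵀ *ᵥ y l) := by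
  simp only [fullContract, multiProd, sum_mul, mulVec, dotProduct]
  rw [sum_comm]
  refine sum_congr rfl fun k _ => ?_
  rw [Fintype.prod_sum, mul_sum]
  refine sum_congr rfl fun j _ => ?_
  simp only [prod_mul_distrib, transpose_apply]
  ring

lemma gmap_multiProd (X : (∀ l, Fin (s l)) → ℝ) (B : ∀ l, Matrix (Fin (R l)) (Fin (s l)) ℝ)
    (x : ∀ l, Fin (R l) → ℝ) :
    gmap (multiProd X B) x = B 0 *ᵥ gmap X (fun l => (B l)ᵀ *ᵥ x l) := by
  funext a
  have hupd : (fun l => (B l)ᵀ *ᵥ Function.update x 0 (Pi.single a 1) l) =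
      Function.update (fun l => (B l)ᵀ *ᵥ x l) 0 ((B 0)ᵀ *ᵥ Pi.single a 1) := by
    funext l
    exact Function.apply_update (fun l v => (B l)ᵀ *ᵥ v) x 0 _ l
  calc gmap (multiProd X B) x a
      = fullContract (multiProd X B) (Function.update x 0 (Pi.single a 1)) := by
        rw [fullContract_update_zero, single_dotProduct, one_mul]
    _ = ((B 0)ᵀ *ᵥ Pi.single a 1) ⬝ᵥ gmap X (fun l => (B l)ᵀ *ᵥ x l) := by
        rw [fullContract_multiProd, hupd, fullContract_update_zero]
    _ = (B 0 *ᵥ gmap X (fun l => (B l)ᵀ *ᵥ x l)) a := by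
        rw [mulVec_transpose, ← dotProduct_mulVec, single_dotProduct, one_mul]

lemma gmap_congr (T : (∀ l, Fin (s l)) → ℝ) {x x' : ∀ l, Fin (s l) → ℝ}
    (h : ∀ l, l ≠ 0 → x l = x' l) : gmap T x = gmap T x' := by
  funext a
  refine sum_congr rfl fun k _ => ?_
  rw [prod_congr rfl fun l hl => by rw [h l (mem_erase.1 hl).1]]

lemma gmap_add (S T : (∀ l, Fin (s l)) → ℝ) (x : ∀ l, Fin (s l) → ℝ) :
    gmap (S + T) x = gmap S x + gmap T x := by
  funext a
  simp only [gmap, Pi.add_apply, ← sum_add_distrib]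
  refine sum_congr rfl fun k _ => ?_
  split_ifs <;> ring

lemma gmap_sub (S T : (∀ l, Fin (s l)) → ℝ) (x : ∀ l, Fin (s l) → ℝ) :
    gmap (S - T) x = gmap S x - gmap T x := by
  funext a
  simp only [gmap, Pi.sub_apply, ← sum_sub_distrib]
  refine sum_congr rfl fun k _ => ?_
  split_ifs <;> ring

lemma gmap_smul (T : (∀ l, Fin (s l)) → ℝ) (c : Fin (d+1) → ℝ) (x : ∀ l, Fin (s l) → ℝ) :
    gmap T (fun l => c l • x l) = (∏ l ∈ univ.erase 0, c l) • gmap T x := by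
  funext a
  simp only [gmap, Pi.smul_apply, smul_eq_mul, mul_sum, mul_ite, mul_zero, prod_mul_distrib]
  refine sum_congr rfl fun k _ => ?_
  split_ifs <;> ring

lemma gmap_eq_zero_of_eq_zero (T : (∀ l, Fin (s l)) → ℝ) {x : ∀ l, Fin (s l) → ℝ} {l : Fin (d+1)}
    (hl : l ≠ 0) (hx : x l = 0) : gmap T x = 0 := by
  funext a
  refine sum_eq_zero fun k _ => ?_
  rw [prod_eq_zero (mem_erase.2 ⟨hl, mem_univ l⟩) (by rw [hx]; rfl)]
  simp

lemma tnorm_bddAbove (T : (∀ l, Fin (s l)) → ℝ) :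
    BddAbove {r | ∃ x : (∀ l, Fin (s l) → ℝ), unitInputs x ∧ r = vnorm (gmap T x)} := by
  refine ⟨Real.sqrt (s 0) * ∑ k, |T k|, ?_⟩
  rintro r ⟨x, hx, rfl⟩
  refine vnorm_le_of_abs_le (by positivity) fun a => ?_
  refine (abs_sum_le_sum_abs _ _).trans (sum_le_sum fun k _ => ?_)
  split_ifs
  · rw [abs_mul, abs_prod]
    refine mul_le_of_le_one_right (abs_nonneg _) (prod_le_one (fun _ _ => abs_nonneg _) ?_)
    exact fun l hl => hx l (mem_erase.1 hl).1 ▸ abs_le_vnorm _ _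
  · simp

lemma tnorm_nonneg (T : (∀ l, Fin (s l)) → ℝ) : 0 ≤ tnorm T :=
  Real.sSup_nonneg fun _ ⟨_, _, hr⟩ => hr ▸ vnorm_nonneg _

lemma vnorm_gmap_le_tnorm (T : (∀ l, Fin (s l)) → ℝ) {x : ∀ l, Fin (s l) → ℝ}
    (hx : unitInputs x) : vnorm (gmap T x) ≤ tnorm T :=
  le_csSup (tnorm_bddAbove T) ⟨x, hx, rfl⟩

lemma tnorm_le {T : (∀ l, Fin (s l)) → ℝ} {c : ℝ} (hc : 0 ≤ c)
    (h : ∀ x, unitInputs x → vnorm (gmap T x) ≤ c) : tnorm T ≤ c :=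
  Real.sSup_le (fun _ ⟨x, hx, hr⟩ => hr ▸ h x hx) hc

lemma vnorm_gmap_le (T : (∀ l, Fin (s l)) → ℝ) (y : ∀ l, Fin (s l) → ℝ) :
    vnorm (gmap T y) ≤ tnorm T * ∏ l ∈ univ.erase 0, vnorm (y l) := by
  by_cases hy : ∃ l, l ≠ 0 ∧ y l = 0
  · obtain ⟨l, hl, hyl⟩ := hy
    rw [gmap_eq_zero_of_eq_zero T hl hyl, prod_eq_zero (mem_erase.2 ⟨hl, mem_univ l⟩)
      (vnorm_eq_zero.2 hyl), mul_zero, vnorm_eq_zero.2 rfl]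
  push Not at hy
  have hpos : ∀ l, l ≠ 0 → 0 < vnorm (y l) := fun l hl =>
    (vnorm_nonneg _).lt_of_ne' (vnorm_eq_zero.not.2 (hy l hl))
  set x : ∀ l, Fin (s l) → ℝ := fun l => (vnorm (y l))⁻¹ • y l
  have hx : unitInputs x := fun l hl => by
    rw [vnorm_smul, abs_inv, abs_of_pos (hpos l hl), inv_mul_cancel₀ (hpos l hl).ne']
  have hyx : gmap T y = gmap T (fun l => vnorm (y l) • x l) :=
    gmap_congr T fun l hl => by rw [smul_inv_smul₀ (hpos l hl).ne']
  rw [hyx, gmap_smul, vnorm_smul, abs_of_nonneg (prod_nonneg fun l _ => vnorm_nonneg _),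
    mul_comm]
  exact mul_le_mul_of_nonneg_right (vnorm_gmap_le_tnorm T hx)
    (prod_nonneg fun l _ => vnorm_nonneg _)

lemma tnorm_add_le (S T : (∀ l, Fin (s l)) → ℝ) : tnorm (S + T) ≤ tnorm S + tnorm T :=
  tnorm_le (add_nonneg (tnorm_nonneg S) (tnorm_nonneg T)) fun x hx => by
    rw [gmap_add]
    exact (vnorm_add_le _ _).trans
      (add_le_add (vnorm_gmap_le_tnorm S hx) (vnorm_gmap_le_tnorm T hx))

lemma tnorm_sub_le (S T : (∀ l, Fin (s l)) → ℝ) : tnorm (S - T) ≤ tnorm S + tnorm T :=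
  tnorm_le (add_nonneg (tnorm_nonneg S) (tnorm_nonneg T)) fun x hx => by
    rw [gmap_sub]
    exact (vnorm_sub_le _ _).trans
      (add_le_add (vnorm_gmap_le_tnorm S hx) (vnorm_gmap_le_tnorm T hx))

lemma keepDims_zero : keepDims s R {0} 0 = s 0 := by simp [keepDims]

lemma keepDims_of_ne_zero {l : Fin (d+1)} (hl : l ≠ 0) : keepDims s R {0} l = R l := by
  simp [keepDims, hl]

lemma multiProd_sub (S T : (∀ l, Fin (s l)) → ℝ) (B : ∀ l, Fin (R l) → Fin (s l) → ℝ) :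
    multiProd (S - T) B = multiProd S B - multiProd T B := by
  funext k
  simp [multiProd, sub_mul, sum_sub_distrib]

lemma partialContract_sub (S T : (∀ l, Fin (s l)) → ℝ) (A : ∀ l, Matrix (Fin (s l)) (Fin (R l)) ℝ)
    (E : Finset (Fin (d+1))) :
    partialContract (S - T) A E = partialContract S A E - partialContract T A E :=
  multiProd_sub S T _

lemma gmap_partialContract_zero (X : (∀ l, Fin (s l)) → ℝ)
    (A : ∀ l, Matrix (Fin (s l)) (Fin (R l)) ℝ) (x : ∀ l, Fin (keepDims s R {0} l) → ℝ)
    {u : ∀ l, Fin (s l) → ℝ}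
    (hu : ∀ l (hl : l ≠ 0), u l = A l *ᵥ (x l ∘ Fin.cast (keepDims_of_ne_zero hl).symm)) :
    gmap (partialContract X A {0}) x = gmap X u ∘ Fin.cast keepDims_zero := by
  refine (gmap_multiProd X _ x).trans ?_
  rw [gmap_congr X (x' := u) fun l hl => ?_]
  · funext a
    simp [mulVec, dotProduct]
  · funext c
    simp only [hu l hl, mulVec, dotProduct, mem_singleton, dif_neg hl]
    exact Fintype.sum_equiv (finCongr (keepDims_of_ne_zero hl)) _ _ fun b => rfl

lemma tnorm_partialContract_zero_le (X : (∀ l, Fin (s l)) → ℝ)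
    (A : ∀ l, Matrix (Fin (s l)) (Fin (R l)) ℝ) :
    tnorm (partialContract X A {0}) ≤ tnorm X * ∏ l ∈ univ.erase 0, mnorm (A l) := by
  refine tnorm_le (mul_nonneg (tnorm_nonneg X) (prod_nonneg fun l _ => mnorm_nonneg _))
    fun x hx => ?_
  set u : ∀ l, Fin (s l) → ℝ := fun l =>
    if hl : l = 0 then 0 else A l *ᵥ (x l ∘ Fin.cast (keepDims_of_ne_zero hl).symm)
  rw [gmap_partialContract_zero X A x (u := u) fun l hl => dif_neg hl, vnorm_comp_cast]
  refine (vnorm_gmap_le X u).trans (mul_le_mul_of_nonneg_left ?_ (tnorm_nonneg X))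
  refine prod_le_prod (fun l _ => vnorm_nonneg _) fun l hl => ?_
  have hl0 := (mem_erase.1 hl).1
  calc vnorm (u l) ≤ mnorm (A l) * vnorm (x l ∘ Fin.cast (keepDims_of_ne_zero hl0).symm) := by
        simp only [u, dif_neg hl0]; exact vnorm_mulVec_le _ _
    _ = mnorm (A l) := by rw [vnorm_comp_cast, hx l hl0, mul_one]

/-- For `T = G ×₁ A₁ ⋯ ×_N A_N`, `g_T(x)` depends on `x l` only through `A lᵀ x l`, so it is
the output of the contracted tensor on the inputs `A lᵀ x l`, which have norm `≤ 1`. -/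
lemma tnorm_multiProd_le_tnorm_partialContract_zero (G : (∀ l, Fin (R l)) → ℝ)
    {A : ∀ l, Matrix (Fin (s l)) (Fin (R l)) ℝ} (hA : ∀ l, (A l)ᵀ * A l = 1) :
    tnorm (multiProd G A) ≤ tnorm (partialContract (multiProd G A) A {0}) := by
  refine tnorm_le (tnorm_nonneg _) fun x hx => ?_
  set xt : ∀ l, Fin (keepDims s R {0} l) → ℝ := fun l =>
    if hl : l = 0 then 0 else ((A l)ᵀ *ᵥ x l) ∘ Fin.cast (keepDims_of_ne_zero hl)
  set u : ∀ l, Fin (s l) → ℝ := fun l => A l *ᵥ ((A l)ᵀ *ᵥ x l)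
  have hgu : gmap (multiProd G A) u = gmap (multiProd G A) x := by
    refine (gmap_multiProd G A u).trans ((gmap_multiProd G A x).trans ?_).symm
    simp only [u, transpose_mulVec_mulVec (hA _)]
  have hxt : gmap (partialContract (multiProd G A) A {0}) xt =
      gmap (multiProd G A) x ∘ Fin.cast keepDims_zero := by
    rw [gmap_partialContract_zero _ A xt (u := u) fun l hl => ?_, hgu]
    simp only [xt, u, dif_neg hl]
    congr 1
  have hxt_le : ∏ l ∈ univ.erase 0, vnorm (xt l) ≤ 1 := by
    refine prod_le_one (fun l _ => vnorm_nonneg _) fun l hl => ?_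
    have hl0 := (mem_erase.1 hl).1
    simp only [xt, dif_neg hl0, vnorm_comp_cast]
    calc vnorm ((A l)ᵀ *ᵥ x l) ≤ mnorm (A l)ᵀ * vnorm (x l) := vnorm_mulVec_le _ _
      _ ≤ 1 := by
        rw [hx l hl0, mul_one]; exact mnorm_transpose_le_one_of_orthonormal (hA l)
  calc vnorm (gmap (multiProd G A) x)
      = vnorm (gmap (partialContract (multiProd G A) A {0}) xt) := by
        rw [hxt, vnorm_comp_cast]
    _ ≤ tnorm (partialContract (multiProd G A) A {0}) * ∏ l ∈ univ.erase 0, vnorm (xt l) :=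
        vnorm_gmap_le _ xt
    _ ≤ tnorm (partialContract (multiProd G A) A {0}) :=
        mul_le_of_le_one_right (tnorm_nonneg _) hxt_le

lemma tnorm_le_tnorm_partialContract_zero_add (X : (∀ l, Fin (s l)) → ℝ) (G : (∀ l, Fin (R l)) → ℝ)
    {A : ∀ l, Matrix (Fin (s l)) (Fin (R l)) ℝ} (hA : ∀ l, (A l)ᵀ * A l = 1) :
    tnorm X ≤ tnorm (partialContract X A {0}) + 2 * tnorm (X - multiProd G A) := by
  set E := X - multiProd G A
  have hX : tnorm X ≤ tnorm (multiProd G A) + tnorm E := by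
    simpa [E] using tnorm_add_le (multiProd G A) E
  have hT : tnorm (partialContract (multiProd G A) A {0}) ≤
      tnorm (partialContract X A {0}) + tnorm (partialContract E A {0}) := by
    rw [show multiProd G A = X - E by simp [E], partialContract_sub]
    exact tnorm_sub_le _ _
  have hE : tnorm (partialContract E A {0}) ≤ tnorm E :=
    (tnorm_partialContract_zero_le E A).trans <| mul_le_of_le_one_right (tnorm_nonneg E) <|
      prod_le_one (fun l _ => mnorm_nonneg _)
        fun l _ => mnorm_le_one_of_orthonormal (hA l)
  linarith [tnorm_multiProd_le_tnorm_partialContract_zero G hA]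

end tensors

theorem tucker_pp_second_order_term_general {d : ℕ} {s R : Fin (d+1) → ℕ}
    (X : (∀ l, Fin (s l)) → ℝ) (G : (∀ l, Fin (R l)) → ℝ)
    (A : ∀ l, Fin (s l) → Fin (R l) → ℝ)
    (hA : ∀ l, ∀ k k' : Fin (R l), ∑ i, A l i k * A l i k' = if k = k' then (1:ℝ) else 0)
    (i j : Fin (d+1)) (hi : i ≠ 0) (hj : j ≠ 0) (hij : i ≠ j)
    (hres : tnorm (fun k => X k - multiProd G A k) ≤ (1/3) * tnorm X)
    (dAi : Fin (s i) → Fin (R i) → ℝ) (dAj : Fin (s j) → Fin (R j) → ℝ)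
    (ε : ℝ) (hdAi : mnorm dAi ≤ ε) (hdAj : mnorm dAj ≤ ε) :
    tnorm (partialContract X (Function.update (Function.update A i dAi) j dAj) {0}) ≤
      5 * ε^2 * tnorm (partialContract X A {0}) := by
  -- `(A := A l)` retypes `A l` as a `Matrix`, which `(A l)ᵀ * A l` needs to elaborate.
  have hA' := fun l => (transpose_mul_self_eq_one_iff (A := A l)).2 (hA l)
  have hε : 0 ≤ ε := (mnorm_nonneg dAi).trans hdAi
  have hX : tnorm X ≤ 3 * tnorm (partialContract X A {0}) := by
    have hres' : tnorm (X - multiProd G A) ≤ 1 / 3 * tnorm X := hres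
    linarith [tnorm_le_tnorm_partialContract_zero_add X G hA']
  set A' := Function.update (Function.update A i dAi) j dAj
  have hprod : ∏ l ∈ univ.erase 0, mnorm (A' l) ≤ ε * ε := by
    refine (prod_le_mul_of_le_one (mem_erase.2 ⟨hi, mem_univ i⟩) (mem_erase.2 ⟨hj, mem_univ j⟩)
      hij (fun _ _ => mnorm_nonneg _) fun l _ hli hlj => ?_).trans ?_
    · simpa [A', hli, hlj] using mnorm_le_one_of_orthonormal (hA' l)
    · simpa [A', hij] using mul_le_mul hdAi hdAj (mnorm_nonneg _) hε
  calc tnorm (partialContract X A' {0}) ≤ tnorm X * ∏ l ∈ univ.erase 0, mnorm (A' l) :=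
        tnorm_partialContract_zero_le X A'
    _ ≤ 3 * tnorm (partialContract X A {0}) * (ε * ε) :=
        mul_le_mul hX hprod (prod_nonneg fun _ _ => mnorm_nonneg _) (by linarith [tnorm_nonneg X])
    _ ≤ 5 * ε ^ 2 * tnorm (partialContract X A {0}) := by
        nlinarith [tnorm_nonneg (partialContract X A {0}), mul_self_nonneg ε]

/-- per-term inequality of Theorem 4.5 of the paper.
Under the hypotheses of the previous statement (orthonormal factors, Tucker residual at most
`(1/3)‖X‖₂`), if `‖dA^{(i)}‖₂ ≤ ε` and `‖dA^{(j)}‖₂ ≤ ε`, then the second-order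
pairwise-perturbation term satisfies
`‖Y^{(i,j,1)} ×ᵢ dA^{(i)ᵀ} ×ⱼ dA^{(j)ᵀ}‖₂ ≤ 5 ε² ‖Y^{(1)}‖₂`.
(The left-hand tensor is `X` contracted with `A l` at every mode `l ∉ {0,i,j}` and with
`dA^{(i)}, dA^{(j)}` at modes `i, j`.) -/
theorem tucker_pp_second_order_term {d : ℕ} {s R : Fin (d+1) → ℕ}
    (X : (∀ l, Fin (s l)) → ℝ) (G : (∀ l, Fin (R l)) → ℝ)
    (A : ∀ l, Fin (s l) → Fin (R l) → ℝ)
    (hR : ∀ l, R l ≤ s l)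
    (hA : ∀ l, ∀ k k' : Fin (R l), ∑ i, A l i k * A l i k' = if k = k' then (1:ℝ) else 0)
    (i j : Fin (d+1)) (hi : i ≠ 0) (hj : j ≠ 0) (hij : i ≠ j)
    (hres : tnorm (fun k => X k - multiProd G A k) ≤ (1/3) * tnorm X)
    (dAi : Fin (s i) → Fin (R i) → ℝ) (dAj : Fin (s j) → Fin (R j) → ℝ)
    (ε : ℝ) (hdAi : mnorm dAi ≤ ε) (hdAj : mnorm dAj ≤ ε) :
    tnorm (partialContract X (Function.update (Function.update A i dAi) j dAj) {0}) ≤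
      5 * ε^2 * tnorm (partialContract X A {0}) :=
  tucker_pp_second_order_term_general X G A hA i j hi hj hij hres dAi dAj ε hdAi hdAj
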